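/- arXiv:2209.00163 — 5 statements merged into one kernel-verified Lean document; each statement's English description precedes it below -/
import Mathlib

section
/- Let u > 0. Define g(L) = (u+1)·ln(u+L) − ln(L) − (u+1)·ln(u+1) for L > 1. Then the second derivative g''(L) ≤ 0 if and only if L ≥ 1 + √(u+1). -/
/-! Away from the poles, g'(x) = (u+1)/(u+x) − 1/x and g''(x) = 1/x² − (u+1)/(u+x)². With
s = √(u+1) > 1, the sign condition 1/L² ≤ s²/(u+L)² becomes u + L ≤ sL, i.e. s² − 1 ≤ (s − 1)L,
i.e. s + 1 ≤ L. -/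

open Real

lemma hasDerivAt_mul_log_add_sub_log (c u d x : ℝ) (hx : x ≠ 0) (hux : u + x ≠ 0) :
    HasDerivAt (fun x : ℝ => c * log (u + x) - log x - d) (c / (u + x) - 1 / x) x := by
  have h := ((((hasDerivAt_id x).const_add u).log hux).const_mul c).sub (hasDerivAt_log hx)
  exact (h.sub_const d).congr_deriv (by simp [div_eq_mul_inv])

lemma hasDerivAt_div_add_sub_one_div (c u x : ℝ) (hx : x ≠ 0) (hux : u + x ≠ 0) :
    HasDerivAt (fun x : ℝ => c / (u + x) - 1 / x) (1 / x ^ 2 - c / (u + x) ^ 2) x := by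
  have h := ((hasDerivAt_const x c).div ((hasDerivAt_id x).const_add u) hux).sub
    ((hasDerivAt_const x 1).div (hasDerivAt_id x) hx)
  exact h.congr_deriv (by simp only [id]; ring)

lemma deriv_deriv_mul_log_add_sub_log (c u d x : ℝ) (hx : x ≠ 0) (hux : u + x ≠ 0) :
    deriv (deriv fun x : ℝ => c * log (u + x) - log x - d) x = 1 / x ^ 2 - c / (u + x) ^ 2 := by
  have hderiv : deriv (fun x : ℝ => c * log (u + x) - log x - d)
      =ᶠ[nhds x] fun x => c / (u + x) - 1 / x := by
    filter_upwards [eventually_ne_nhds hx,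
      (continuous_const_add u).continuousAt.eventually_ne hux] with y hy huy
    exact (hasDerivAt_mul_log_add_sub_log c u d y hy huy).deriv
  rw [hderiv.deriv_eq]
  exact (hasDerivAt_div_add_sub_one_div c u x hx hux).deriv

lemma one_div_sq_le_succ_div_add_sq_iff {u L : ℝ} (hu : 0 < u) (hL : 0 < L) :
    1 / L ^ 2 ≤ (u + 1) / (u + L) ^ 2 ↔ 1 + √(u + 1) ≤ L := by
  set s := √(u + 1)
  have hs2 : s ^ 2 = u + 1 := sq_sqrt (by positivity)
  have hs1 : 1 < s := by
    rw [← sqrt_one]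
    exact sqrt_lt_sqrt zero_le_one (by linarith)
  rw [div_le_div_iff₀ (by positivity) (by positivity), one_mul, ← hs2, ← mul_pow,
    pow_le_pow_iff_left₀ (by positivity) (by positivity) two_ne_zero]
  have hu_eq : (s - 1) * (s + 1) = u := by linear_combination hs2
  calc u + L ≤ s * L ↔ u ≤ (s - 1) * L := by rw [sub_mul, one_mul, le_sub_iff_add_le]
    _ ↔ (s - 1) * (s + 1) ≤ (s - 1) * L := by rw [hu_eq]
    _ ↔ 1 + s ≤ L := by
        rw [mul_le_mul_iff_right₀ (by linarith), add_comm]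

theorem stmt_2 (u : ℝ) (hu : 0 < u) (L : ℝ) (hL : 1 < L) :
    deriv (deriv (fun x : ℝ => (u + 1) * Real.log (u + x) - Real.log x - (u + 1) * Real.log (u + 1))) L ≤ 0
      ↔ L ≥ 1 + Real.sqrt (u + 1) := by
  have hL0 : 0 < L := zero_lt_one.trans hL
  rw [deriv_deriv_mul_log_add_sub_log _ _ _ L hL0.ne' (by positivity), sub_nonpos, ge_iff_le]
  exact one_div_sq_le_succ_div_add_sq_iff hu hL0
end

section
/- Let α = (α₁,…,α_d) and β = (β₁,…,β_d) be tuples of nonnegative real numbers, let ᾱ be the decreasing rearrangement of α and β̄ the increasing rearrangement of β. Then ∏_{i=1}^d (α_i + β_i) ≤ ∏_{i=1}^d (ᾱ_i + β̄_i). -/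
/-!
Pair the coordinates with a permutation `σ`, and let `i` be the least index that `σ` moves and
`j = σ⁻¹ i`. Re-pairing `i` with itself and `j` with `σ i` can only increase the product, since
`(a + b') (a' + b) ≤ (a + b) (a' + b')` whenever `a' ≤ a` and `b ≤ b'`. The new permutation moves
fewer indices, so induction on the size of the support gives the rearrangement inequality for an
antitone and a monotone sequence. The theorem is this inequality after reindexing by `σ`.
-/

open Finset Equiv Equiv.Perm

theorem add_mul_add_le_add_mul_add {R : Type*} [CommRing R] [PartialOrder R] [IsOrderedRing R]
    {a a' b b' : R} (ha : a' ≤ a) (hb : b ≤ b') :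
    (a + b') * (a' + b) ≤ (a + b) * (a' + b') := by
  have key : (a + b) * (a' + b') - (a + b') * (a' + b) = (a - a') * (b' - b) := by ring
  exact sub_nonneg.1 (key ▸ mul_nonneg (sub_nonneg.2 ha) (sub_nonneg.2 hb))

theorem Finset.prod_le_prod_of_eq_off_pair {ι R : Type*} [Fintype ι] [DecidableEq ι]
    [CommSemiring R] [PartialOrder R] [IsOrderedRing R] {f g : ι → R} {i j : ι} (hij : i ≠ j)
    (hg : ∀ k, 0 ≤ g k) (heq : ∀ k, k ≠ i → k ≠ j → f k = g k) (hle : f i * f j ≤ g i * g j) :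
    ∏ k, f k ≤ ∏ k, g k := by
  have split (h : ι → R) : ∏ k, h k = h i * h j * ∏ k ∈ (univ.erase i).erase j, h k := by
    rw [mul_assoc, mul_prod_erase _ _ (mem_erase.2 ⟨hij.symm, mem_univ j⟩),
      mul_prod_erase _ _ (mem_univ i)]
  rw [split f, split g, prod_congr rfl fun k hk => heq k (ne_of_mem_erase (mem_of_mem_erase hk))
    (ne_of_mem_erase hk)]
  exact mul_le_mul_of_nonneg_right hle (prod_nonneg fun k _ => hg k)

theorem prod_add_comp_perm_le_prod_add {ι R : Type*} [LinearOrder ι] [Fintype ι]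
    [CommRing R] [PartialOrder R] [IsOrderedRing R] {a b : ι → R}
    (ha₀ : ∀ i, 0 ≤ a i) (hb₀ : ∀ i, 0 ≤ b i) (ha : Antitone a) (hb : Monotone b) (σ : Perm ι) :
    ∏ i, (a i + b (σ i)) ≤ ∏ i, (a i + b i) := by
  induction hn : #σ.support using Nat.strong_induction_on generalizing σ with
  | _ n ih =>
  obtain rfl | hσ := eq_or_ne σ 1
  · simp
  have hne : σ.support.Nonempty := nonempty_iff_ne_empty.2 (support_eq_empty_iff.not.2 hσ)
  set i := σ.support.min' hne
  have hi : σ i ≠ i := mem_support.1 (min'_mem _ hne)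
  set j := σ.symm i
  have hσj : σ j = i := σ.apply_symm_apply i
  have hji : j ≠ i := fun h => hi (h ▸ hσj)
  have hij : i ≤ j := min'_le _ j (mem_support.2 (hσj ▸ hji.symm))
  have hiσi : i ≤ σ i := min'_le _ _ (apply_mem_support.2 (mem_support.2 hi))
  calc ∏ k, (a k + b (σ k)) ≤ ∏ k, (a k + b ((swap i (σ i) * σ) k)) := by
        refine prod_le_prod_of_eq_off_pair hji.symm (fun k => add_nonneg (ha₀ k) (hb₀ _))
          (fun k hki hkj => ?_) ?_
        · rw [mul_apply, swap_apply_of_ne_of_ne (fun h => hkj (σ.injective (h.trans hσj.symm)))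
            (σ.injective.ne hki)]
        · simp only [mul_apply, swap_apply_right, hσj, swap_apply_left]
          exact add_mul_add_le_add_mul_add (ha hij) (hb hiσi)
    _ ≤ ∏ k, (a k + b k) := ih _ (hn ▸ card_support_swap_mul hi) _ rfl

theorem stmt_5 (d : ℕ) (α β αbar βbar : Fin d → ℝ)
    (hα : ∀ i, 0 ≤ α i) (hβ : ∀ i, 0 ≤ β i)
    (hαperm : ∃ σ : Equiv.Perm (Fin d), αbar = α ∘ σ) (hαdec : Antitone αbar)
    (hβperm : ∃ τ : Equiv.Perm (Fin d), βbar = β ∘ τ) (hβinc : Monotone βbar) :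
    ∏ i, (α i + β i) ≤ ∏ i, (αbar i + βbar i) := by
  obtain ⟨σ, rfl⟩ := hαperm
  obtain ⟨τ, rfl⟩ := hβperm
  calc ∏ i, (α i + β i) = ∏ i, (α (σ i) + β (τ ((σ.trans τ.symm) i))) := by
        rw [← Equiv.prod_comp σ]
        simp
    _ ≤ ∏ i, (α (σ i) + β (τ i)) :=
        prod_add_comp_perm_le_prod_add (fun i => hα _) (fun i => hβ _) hαdec hβinc _
end

section
/- Let K and L be positive semidefinite real d×d matrices with K positive definite. If for every antisymmetric d×d matrix H one has trace((K+L)⁻¹(HL − LH)) = 0, then K and L commute. -/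
/-!
Test the condition with `H = [L, (K + L)⁻¹]`, which is antisymmetric since both factors are
symmetric. Cyclicity of the trace turns `tr((K + L)⁻¹ [H, L])` into `tr(H²) = -tr(Hᵀ H)`, so `H = 0`:
`L` commutes with `(K + L)⁻¹`, hence with `K + L`, hence with `K`.
-/

open Matrix

namespace Matrix

variable {n R : Type*} [Fintype n]

theorem trace_mul_commutator_eq_trace_mul_commutator [CommRing R] (M H L : Matrix n n R) :
    trace (M * (H * L - L * H)) = trace (H * (L * M - M * L)) := by
  simp only [Matrix.mul_sub, trace_sub, ← Matrix.mul_assoc]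
  rw [← trace_mul_cycle H L M, trace_mul_cycle M L H]

theorem IsHermitian.conjTranspose_commutator [Ring R] [StarRing R] {A B : Matrix n n R}
    (hA : A.IsHermitian) (hB : B.IsHermitian) : (A * B - B * A)ᴴ = -(A * B - B * A) := by
  rw [conjTranspose_sub, conjTranspose_mul, conjTranspose_mul, hA.eq, hB.eq, neg_sub]

theorem eq_zero_of_conjTranspose_eq_neg_of_trace_mul_self_eq_zero [PartialOrder R] [Ring R]
    [StarRing R] [StarOrderedRing R] [NoZeroDivisors R] {H : Matrix n n R} (hH : Hᴴ = -H)
    (h : trace (H * H) = 0) : H = 0 := by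
  rw [← trace_conjTranspose_mul_self_eq_zero_iff, hH, Matrix.neg_mul, trace_neg, h, neg_zero]

theorem commute_of_commute_inv [DecidableEq n] [CommRing R] {A B : Matrix n n R} (hB : IsUnit B)
    (h : Commute A B⁻¹) : Commute A B := by
  obtain ⟨u, rfl⟩ := hB
  rwa [← coe_units_inv, Commute.units_inv_right_iff] at h

end Matrix

theorem stmt_6 (d : ℕ) (K L : Matrix (Fin d) (Fin d) ℝ)
    (hK : K.PosDef) (hL : L.PosSemidef)
    (hstat : ∀ H : Matrix (Fin d) (Fin d) ℝ, H.transpose = -H →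
      Matrix.trace ((K + L)⁻¹ * (H * L - L * H)) = 0) :
    K * L = L * K := by
  have hKL : (K + L).PosDef := hK.add_posSemidef hL
  set H := L * (K + L)⁻¹ - (K + L)⁻¹ * L
  have hH : Hᴴ = -H := hL.isHermitian.conjTranspose_commutator hKL.isHermitian.inv
  have hHH : trace (H * H) = 0 := by
    rw [← trace_mul_commutator_eq_trace_mul_commutator]
    exact hstat H (by rwa [← conjTranspose_eq_transpose_of_trivial])
  have hL_comm_inv : Commute L (K + L)⁻¹ :=
    sub_eq_zero.mp (eq_zero_of_conjTranspose_eq_neg_of_trace_mul_self_eq_zero hH hHH)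
  have hL_comm : Commute L (K + L) := commute_of_commute_inv hKL.isUnit hL_comm_inv
  simpa using (hL_comm.sub_right (Commute.refl L)).symm.eq
end

section
/- Let K, u > 0, let X ~ N(0,K) and Z ~ N(0,u) be independent, and let X̂ = X + Z. Then for every nonnegative integer k, E[D^k γ_K(X) / γ_K(X) | X̂] = D^k γ_{K+u}(X̂) / γ_{K+u}(X̂) almost surely, where γ_V is the centered Gaussian density with variance V and D^k the k-th derivative. -/
open MeasureTheory ProbabilityTheory

noncomputable def gaussDensity (V : ℝ) (x : ℝ) : ℝ :=
  (Real.sqrt (2 * Real.pi * V))⁻¹ * Real.exp (-x ^ 2 / (2 * V))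

/-! Write `h = D^k γ_K`. Since `X` and `Z` are independent with densities `γ_K` and `γ_u`,
`E[D^k γ_K(X) / γ_K(X); X + Z ∈ B] = ∫_B (h * γ_u)`. Differentiating the Gaussian identity
`γ_K * γ_u = γ_{K+u}` (completing the square) `k` times under the integral sign gives
`h * γ_u = D^k γ_{K+u}`; differentiation under the integral is legitimate because every `D^j γ_K` is
a polynomial times `γ_K`, hence bounded. Finally `X + Z ~ N(0, K + u)`, so `∫_B D^k γ_{K+u}` is
also `E[D^k γ_{K+u}(X + Z) / γ_{K+u}(X + Z); X + Z ∈ B]`. -/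

open Filter Topology Polynomial

lemma integrable_eval_mul_exp_neg_mul_sq {b : ℝ} (hb : 0 < b) (p : ℝ[X]) :
    Integrable fun x => p.eval x * Real.exp (-b * x ^ 2) := by
  induction p using Polynomial.induction_on' with
  | add p q hp hq =>
    refine (hp.add hq).congr (ae_of_all _ fun x => ?_)
    simp only [eval_add, add_mul, Pi.add_apply]
  | monomial n a =>
    have h := integrable_rpow_mul_exp_neg_mul_sq hb (s := n) (neg_one_lt_zero.trans_le n.cast_nonneg)
    simpa only [eval_monomial, Real.rpow_natCast, mul_assoc] using h.const_mul a

lemma tendsto_eval_mul_exp_neg_mul_sq_cocompact {b : ℝ} (hb : 0 < b) (p : ℝ[X]) :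
    Tendsto (fun x => p.eval x * Real.exp (-b * x ^ 2)) (cocompact ℝ) (𝓝 0) := by
  induction p using Polynomial.induction_on' with
  | add p q hp hq => simpa only [eval_add, add_mul, add_zero] using hp.add hq
  | monomial n a =>
    rw [tendsto_zero_iff_norm_tendsto_zero]
    have h := (tendsto_rpow_abs_mul_exp_neg_mul_sq_cocompact hb n).const_mul |a|
    simpa only [eval_monomial, norm_mul, Real.norm_eq_abs, abs_pow, Real.abs_exp, Real.rpow_natCast,
      mul_zero, mul_assoc] using h

lemma exists_abs_le_of_tendsto_cocompact {f : ℝ → ℝ} (hf : Continuous f)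
    (hf0 : Tendsto f (cocompact ℝ) (𝓝 0)) : ∃ C, ∀ x, |f x| ≤ C := by
  obtain ⟨C, hC⟩ := isBounded_iff_forall_norm_le.mp
    (ZeroAtInftyContinuousMap.isBounded_range ⟨⟨f, hf⟩, hf0⟩)
  exact ⟨C, fun x => hC _ ⟨x, rfl⟩⟩

lemma hasDerivAt_integral_mul_comp_sub {g f : ℝ → ℝ} (hg : Integrable g) (hf : Differentiable ℝ f)
    (hf' : Continuous (deriv f)) {C C' : ℝ} (hfC : ∀ x, |f x| ≤ C) (hf'C : ∀ x, |deriv f x| ≤ C')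
    (y : ℝ) :
    HasDerivAt (fun y => ∫ z, g z * f (y - z)) (∫ z, g z * deriv f (y - z)) y := by
  have hmeas {h : ℝ → ℝ} (hh : Continuous h) (t : ℝ) :
      AEStronglyMeasurable (fun z => h (t - z)) :=
    (hh.comp (continuous_const.sub continuous_id)).aestronglyMeasurable
  refine (hasDerivAt_integral_of_dominated_loc_of_deriv_le
    (F := fun t z => g z * f (t - z)) (F' := fun t z => g z * deriv f (t - z))
    (bound := fun z => |g z| * C') Filter.univ_mem
    (Eventually.of_forall fun t => hg.aestronglyMeasurable.mul (hmeas hf.continuous t))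
    (hg.mul_bdd (hmeas hf.continuous y) (ae_of_all _ fun z => hfC (y - z)))
    (hg.aestronglyMeasurable.mul (hmeas hf' y))
    (ae_of_all _ fun z t _ => ?_) (hg.abs.mul_const C')
    (ae_of_all _ fun z t _ => ?_)).2
  · rw [Real.norm_eq_abs, abs_mul]
    exact mul_le_mul_of_nonneg_left (hf'C (t - z)) (abs_nonneg _)
  · simpa using ((hf (t - z)).hasDerivAt.comp t ((hasDerivAt_id t).sub_const z)).const_mul (g z)

lemma integral_mul_setIntegral_comp_sub {g h : ℝ → ℝ} (hg : Integrable g) (hh : Integrable h)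
    (B : Set ℝ) :
    ∫ z, g z * ∫ y in B, h (y - z) = ∫ y in B, ∫ z, g z * h (y - z) := by
  simp_rw [← integral_const_mul]
  refine integral_integral_swap ?_
  have h := (hg.convolution_integrand (ContinuousLinearMap.mul ℝ ℝ) hh (μ := volume)).swap
  exact (h.mono_measure (Measure.prod_mono le_rfl Measure.restrict_le_self)).congr
    (ae_of_all _ fun p => by simp [Function.uncurry])

lemma setIntegral_preimage_add_eq_integral_setIntegral {Ω : Type*} [MeasurableSpace Ω]
    {μ : Measure Ω} [IsFiniteMeasure μ] {X Z : Ω → ℝ} (hX : Measurable X) (hZ : Measurable Z)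
    (hind : IndepFun X Z μ) {φ : ℝ → ℝ} (hφ : Integrable φ (μ.map X)) {B : Set ℝ}
    (hB : MeasurableSet B) :
    ∫ ω in (fun ω => X ω + Z ω) ⁻¹' B, φ (X ω) ∂μ
      = ∫ z, ∫ x in (· + z) ⁻¹' B, φ x ∂(μ.map X) ∂(μ.map Z) := by
  have hT : MeasurableSet {p : ℝ × ℝ | p.1 + p.2 ∈ B} := (measurable_fst.add measurable_snd) hB
  have hprod := (indepFun_iff_map_prod_eq_prod_map_map hX.aemeasurable hZ.aemeasurable).mp hind
  have hφ' : Integrable (fun p : ℝ × ℝ => φ p.1) ((μ.map X).prod (μ.map Z)) :=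
    hφ.comp_fst _
  calc ∫ ω in (fun ω => X ω + Z ω) ⁻¹' B, φ (X ω) ∂μ
      = ∫ p in {p : ℝ × ℝ | p.1 + p.2 ∈ B}, φ p.1 ∂(μ.map fun ω => (X ω, Z ω)) :=
        (setIntegral_map hT (hprod ▸ hφ'.aestronglyMeasurable) (hX.prodMk hZ).aemeasurable).symm
    _ = ∫ z, ∫ x, {p : ℝ × ℝ | p.1 + p.2 ∈ B}.indicator (fun p => φ p.1) (x, z)
          ∂(μ.map X) ∂(μ.map Z) := by
        rw [hprod, ← integral_indicator hT, integral_prod_symm _ (hφ'.indicator hT)]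
    _ = _ := by
        simp_rw [← integral_indicator (measurable_add_const _ hB)]
        rfl

lemma NNReal.mk_ne_zero_of_pos {V : ℝ} (hV : 0 < V) : (⟨V, hV.le⟩ : NNReal) ≠ 0 :=
  fun h => hV.ne' (congrArg Subtype.val h)

lemma gaussDensity_eq_mul_exp_neg_mul_sq (V x : ℝ) :
    gaussDensity V x = (Real.sqrt (2 * Real.pi * V))⁻¹ * Real.exp (-(2 * V)⁻¹ * x ^ 2) := by
  rw [gaussDensity, neg_div, div_eq_inv_mul, neg_mul]

lemma gaussDensity_pos {V : ℝ} (hV : 0 < V) (x : ℝ) : 0 < gaussDensity V x := by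
  unfold gaussDensity
  positivity

lemma gaussDensity_eq_gaussianPDFReal {V : ℝ} (hV : 0 ≤ V) :
    gaussDensity V = gaussianPDFReal 0 ⟨V, hV⟩ := by
  ext x
  simp only [gaussDensity, gaussianPDFReal, sub_zero]
  rfl

lemma integrable_gaussDensity {V : ℝ} (hV : 0 < V) : Integrable (gaussDensity V) := by
  rw [gaussDensity_eq_gaussianPDFReal hV.le]
  exact integrable_gaussianPDFReal 0 _

lemma integral_gaussDensity {V : ℝ} (hV : 0 < V) : ∫ x, gaussDensity V x = 1 := by
  rw [gaussDensity_eq_gaussianPDFReal hV.le]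
  exact integral_gaussianPDFReal_eq_one 0 (NNReal.mk_ne_zero_of_pos hV)

lemma contDiff_gaussDensity (V : ℝ) : ContDiff ℝ ⊤ (gaussDensity V) := by
  unfold gaussDensity
  fun_prop

lemma hasDerivAt_gaussDensity (V x : ℝ) :
    HasDerivAt (gaussDensity V) (-(x / V) * gaussDensity V x) x := by
  have h : HasDerivAt (gaussDensity V) _ x :=
    (((hasDerivAt_pow 2 x).neg.div_const (2 * V)).exp).const_mul (Real.sqrt (2 * Real.pi * V))⁻¹
  convert h using 1
  simp only [gaussDensity, Pi.neg_apply]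
  ring

lemma exists_iteratedDeriv_gaussDensity_eq_eval_mul (V : ℝ) (k : ℕ) :
    ∃ p : ℝ[X], iteratedDeriv k (gaussDensity V) = fun x => p.eval x * gaussDensity V x := by
  induction k with
  | zero => exact ⟨1, by simp⟩
  | succ k ih =>
    obtain ⟨p, hp⟩ := ih
    refine ⟨derivative p - C V⁻¹ * X * p, funext fun x => ?_⟩
    rw [iteratedDeriv_succ, hp]
    refine (((p.hasDerivAt x).mul (hasDerivAt_gaussDensity V x)).congr_deriv ?_).deriv
    simp only [eval_sub, eval_mul, eval_C, eval_X]
    ring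

lemma integrable_iteratedDeriv_gaussDensity {V : ℝ} (hV : 0 < V) (k : ℕ) :
    Integrable (iteratedDeriv k (gaussDensity V)) := by
  obtain ⟨p, hp⟩ := exists_iteratedDeriv_gaussDensity_eq_eval_mul V k
  have h := (integrable_eval_mul_exp_neg_mul_sq (b := (2 * V)⁻¹) (by positivity) p).const_mul
    (Real.sqrt (2 * Real.pi * V))⁻¹
  refine h.congr (ae_of_all _ fun x => ?_)
  simp only [hp, gaussDensity_eq_mul_exp_neg_mul_sq]
  ring

lemma exists_abs_iteratedDeriv_gaussDensity_le {V : ℝ} (hV : 0 < V) (k : ℕ) :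
    ∃ C, ∀ x, |iteratedDeriv k (gaussDensity V) x| ≤ C := by
  refine exists_abs_le_of_tendsto_cocompact
    ((contDiff_gaussDensity V).continuous_iteratedDeriv k (by simp)) ?_
  obtain ⟨p, hp⟩ := exists_iteratedDeriv_gaussDensity_eq_eval_mul V k
  have h := (tendsto_eval_mul_exp_neg_mul_sq_cocompact (b := (2 * V)⁻¹) (by positivity) p).const_mul
    (Real.sqrt (2 * Real.pi * V))⁻¹
  rw [mul_zero] at h
  refine h.congr fun x => ?_
  simp only [hp, gaussDensity_eq_mul_exp_neg_mul_sq]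
  ring

lemma gaussDensity_mul_gaussDensity_sub {K u : ℝ} (hK : 0 < K) (hu : 0 < u) (y z : ℝ) :
    gaussDensity u z * gaussDensity K (y - z)
      = gaussDensity (K + u) y * gaussDensity (K * u / (K + u)) (z - u * y / (K + u)) := by
  have hKu : 0 < K + u := by linarith
  have hconst : (Real.sqrt (2 * Real.pi * u))⁻¹ * (Real.sqrt (2 * Real.pi * K))⁻¹
      = (Real.sqrt (2 * Real.pi * (K + u)))⁻¹ * (Real.sqrt (2 * Real.pi * (K * u / (K + u))))⁻¹ := by
    rw [← mul_inv, ← mul_inv, ← Real.sqrt_mul (by positivity), ← Real.sqrt_mul (by positivity)]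
    field_simp
  have hexp : -z ^ 2 / (2 * u) + -(y - z) ^ 2 / (2 * K)
      = -y ^ 2 / (2 * (K + u)) + -(z - u * y / (K + u)) ^ 2 / (2 * (K * u / (K + u))) := by
    field_simp
    ring
  calc gaussDensity u z * gaussDensity K (y - z)
      = (Real.sqrt (2 * Real.pi * u))⁻¹ * (Real.sqrt (2 * Real.pi * K))⁻¹ *
          Real.exp (-z ^ 2 / (2 * u) + -(y - z) ^ 2 / (2 * K)) := by
        rw [Real.exp_add, gaussDensity, gaussDensity]; ring
    _ = _ := by
        rw [hconst, hexp, Real.exp_add, gaussDensity, gaussDensity]; ring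

lemma integral_gaussDensity_mul_gaussDensity_sub {K u : ℝ} (hK : 0 < K) (hu : 0 < u) (y : ℝ) :
    ∫ z, gaussDensity u z * gaussDensity K (y - z) = gaussDensity (K + u) y := by
  simp_rw [gaussDensity_mul_gaussDensity_sub hK hu y, integral_const_mul,
    integral_sub_right_eq_self (gaussDensity (K * u / (K + u))),
    integral_gaussDensity (by positivity : 0 < K * u / (K + u)), mul_one]

lemma integral_gaussDensity_mul_iteratedDeriv_sub {K u : ℝ} (hK : 0 < K) (hu : 0 < u) (k : ℕ) :
    (fun y => ∫ z, gaussDensity u z * iteratedDeriv k (gaussDensity K) (y - z))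
      = iteratedDeriv k (gaussDensity (K + u)) := by
  induction k with
  | zero => exact funext (integral_gaussDensity_mul_gaussDensity_sub hK hu)
  | succ k ih =>
    have hsmooth := contDiff_gaussDensity K
    obtain ⟨C, hC⟩ := exists_abs_iteratedDeriv_gaussDensity_le hK k
    obtain ⟨C', hC'⟩ := exists_abs_iteratedDeriv_gaussDensity_le hK (k + 1)
    rw [iteratedDeriv_succ] at hC'
    rw [iteratedDeriv_succ (f := gaussDensity (K + u)), ← ih, iteratedDeriv_succ]
    ext y
    refine (hasDerivAt_integral_mul_comp_sub (integrable_gaussDensity hu)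
      (hsmooth.differentiable_iteratedDeriv k (by simp)) ?_ hC hC' y).deriv.symm
    rw [← iteratedDeriv_succ]
    exact hsmooth.continuous_iteratedDeriv (k + 1) (by simp)

lemma integral_gaussianReal_eq {V : ℝ} (hV : 0 < V) (φ : ℝ → ℝ) :
    ∫ y, φ y ∂gaussianReal 0 ⟨V, hV.le⟩ = ∫ y, gaussDensity V y * φ y := by
  rw [integral_gaussianReal_eq_integral_smul (NNReal.mk_ne_zero_of_pos hV),
    gaussDensity_eq_gaussianPDFReal hV.le]
  rfl

lemma setIntegral_gaussianReal_eq {V : ℝ} (hV : 0 < V) {B : Set ℝ} (hB : MeasurableSet B)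
    (φ : ℝ → ℝ) :
    ∫ y in B, φ y ∂gaussianReal 0 ⟨V, hV.le⟩ = ∫ y in B, gaussDensity V y * φ y := by
  simp_rw [← integral_indicator hB, integral_gaussianReal_eq hV, Set.indicator_mul_right]

lemma integrable_gaussianReal_iff {V : ℝ} (hV : 0 < V) (φ : ℝ → ℝ) :
    Integrable φ (gaussianReal 0 ⟨V, hV.le⟩) ↔ Integrable fun y => gaussDensity V y * φ y := by
  rw [gaussianReal_of_var_ne_zero _ (NNReal.mk_ne_zero_of_pos hV)]
  refine (integrable_withDensity_iff_integrable_smul' (measurable_gaussianPDF _ _)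
    (ae_of_all _ fun _ => gaussianPDF_lt_top)).trans ?_
  refine integrable_congr (ae_of_all _ fun x => ?_)
  show (gaussianPDF 0 ⟨V, hV.le⟩ x).toReal * φ x = gaussDensity V x * φ x
  rw [gaussDensity_eq_gaussianPDFReal hV.le]
  exact congrArg (· * φ x) (toReal_gaussianPDF x)

noncomputable def gaussDerivRatio (V : ℝ) (k : ℕ) (x : ℝ) : ℝ :=
  iteratedDeriv k (gaussDensity V) x / gaussDensity V x

lemma continuous_gaussDerivRatio {V : ℝ} (hV : 0 < V) (k : ℕ) :
    Continuous (gaussDerivRatio V k) :=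
  ((contDiff_gaussDensity V).continuous_iteratedDeriv k (by simp)).div
    (contDiff_gaussDensity V).continuous fun x => (gaussDensity_pos hV x).ne'

lemma gaussDensity_mul_gaussDerivRatio {V : ℝ} (hV : 0 < V) (k : ℕ) (x : ℝ) :
    gaussDensity V x * gaussDerivRatio V k x = iteratedDeriv k (gaussDensity V) x :=
  mul_div_cancel₀ _ (gaussDensity_pos hV x).ne'

lemma integrable_gaussDerivRatio {V : ℝ} (hV : 0 < V) (k : ℕ) :
    Integrable (gaussDerivRatio V k) (gaussianReal 0 ⟨V, hV.le⟩) := by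
  rw [integrable_gaussianReal_iff hV]
  simpa only [gaussDensity_mul_gaussDerivRatio hV] using integrable_iteratedDeriv_gaussDensity hV k

lemma setIntegral_gaussDerivRatio {V : ℝ} (hV : 0 < V) (k : ℕ) {B : Set ℝ}
    (hB : MeasurableSet B) :
    ∫ y in B, gaussDerivRatio V k y ∂gaussianReal 0 ⟨V, hV.le⟩
      = ∫ y in B, iteratedDeriv k (gaussDensity V) y := by
  simp_rw [setIntegral_gaussianReal_eq hV hB, gaussDensity_mul_gaussDerivRatio hV]

lemma setIntegral_preimage_add_gaussDerivRatio {V : ℝ} (hV : 0 < V) (k : ℕ) {B : Set ℝ}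
    (hB : MeasurableSet B) (z : ℝ) :
    ∫ x in (· + z) ⁻¹' B, gaussDerivRatio V k x ∂gaussianReal 0 ⟨V, hV.le⟩
      = ∫ y in B, iteratedDeriv k (gaussDensity V) (y - z) := by
  rw [setIntegral_gaussDerivRatio hV k (measurable_add_const z hB)]
  simpa only [add_sub_cancel_right] using
    (measurePreserving_add_right volume z).setIntegral_preimage_emb
      (measurableEmbedding_addRight z) (fun y => iteratedDeriv k (gaussDensity V) (y - z)) B

theorem stmt_11 {Ω : Type*} [m0 : MeasurableSpace Ω] (μ : Measure Ω) [IsProbabilityMeasure μ]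
    (K u : ℝ) (hK : 0 < K) (hu : 0 < u)
    (X Z : Ω → ℝ) (hX : Measurable X) (hZ : Measurable Z)
    (hind : IndepFun X Z μ)
    (hXlaw : μ.map X = gaussianReal 0 ⟨K, hK.le⟩)
    (hZlaw : μ.map Z = gaussianReal 0 ⟨u, hu.le⟩)
    (k : ℕ) :
    μ[fun ω => iteratedDeriv k (gaussDensity K) (X ω) / gaussDensity K (X ω) |
        MeasurableSpace.comap (fun ω => X ω + Z ω) (borel ℝ)]
      =ᵐ[μ] fun ω =>
        iteratedDeriv k (gaussDensity (K + u)) (X ω + Z ω) / gaussDensity (K + u) (X ω + Z ω) := by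
  have hKu : 0 < K + u := add_pos hK hu
  have hY : Measurable fun ω => X ω + Z ω := hX.add hZ
  have hYlaw : μ.map (fun ω => X ω + Z ω) = gaussianReal 0 ⟨K + u, hKu.le⟩ := by
    have h := gaussianReal_add_gaussianReal_of_indepFun hind hXlaw hZlaw
    rw [zero_add] at h
    exact h
  change μ[fun ω => gaussDerivRatio K k (X ω) | _]
    =ᵐ[μ] fun ω => gaussDerivRatio (K + u) k (X ω + Z ω)
  rw [← BorelSpace.measurable_eq (α := ℝ)]
  have hratio := (continuous_gaussDerivRatio hKu k).measurable
  refine (ae_eq_condExp_of_forall_setIntegral_eq hY.comap_le ?_ (fun s _ _ => ?_) ?_ ?_).symm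
  · exact (integrable_map_measure (continuous_gaussDerivRatio hK k).aestronglyMeasurable
      hX.aemeasurable).mp (hXlaw ▸ integrable_gaussDerivRatio hK k)
  · exact ((integrable_map_measure hratio.aestronglyMeasurable hY.aemeasurable).mp
      (hYlaw ▸ integrable_gaussDerivRatio hKu k)).integrableOn
  · rintro _ ⟨B, hB, rfl⟩ -
    rw [← setIntegral_map hB hratio.aestronglyMeasurable hY.aemeasurable, hYlaw,
      setIntegral_gaussDerivRatio hKu k hB, setIntegral_preimage_add_eq_integral_setIntegral hX hZ
        hind (hXlaw ▸ integrable_gaussDerivRatio hK k) hB, hXlaw, hZlaw]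
    simp_rw [setIntegral_preimage_add_gaussDerivRatio hK k hB]
    rw [integral_gaussianReal_eq hu, integral_mul_setIntegral_comp_sub (integrable_gaussDensity hu)
      (integrable_iteratedDeriv_gaussDensity hK k), ← integral_gaussDensity_mul_iteratedDeriv_sub hK hu k]
  · exact (hratio.comp (Measurable.of_comap_le le_rfl)).aestronglyMeasurable
end

section
/- Let p be a probability density function on ℝ^d and r a measurable function on ℝ^d with ∫ r = 0 and sup_x |r(x)/p(x)| =: M < ∞. Then for all real ε with |ε| < 1/(2M), we have |∫ (p+εr)ln(p+εr) − ∫ p ln p − ε ∫ r ln p − (ε²/2) ∫ r²/p| ≤ ε³ M³ (up to an absolute constant), i.e., ∫(p+εr)ln(p+εr) = ∫ p ln p + ε∫ r ln p + (ε²/2)∫ r²/p + O(ε³). -/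
open MeasureTheory Real

/-!
Write `R(a, b)` for the second-order Taylor remainder of `x ↦ x log x` at `a` with increment `b`.
Scaling `b = a t` gives `R(a, a t) = a ((1 + t) log (1 + t) - t - t² / 2)`, and the logarithmic
series bounds the bracket by `4 |t|³` for `|t| ≤ 1/2`. Since `|ε r| ≤ |ε| M p` with `|ε| M ≤ 1/2`,
this yields `|R(p, ε r)| ≤ 4 (|ε| M)³ p` pointwise; integrating against the probability density `p`
gives the bound, and the first-order term `ε ∫ r` vanishes.
-/

theorem abs_log_one_add_sub_le {t : ℝ} (ht : |t| ≤ 1 / 2) :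
    |log (1 + t) - t + t ^ 2 / 2| ≤ 2 * |t| ^ 3 := by
  have hseries := abs_log_sub_add_sum_range_le (x := -t) (by rw [abs_neg]; linarith) 2
  simp only [Finset.sum_range_succ, Finset.sum_range_zero, abs_neg, sub_neg_eq_add] at hseries
  calc |log (1 + t) - t + t ^ 2 / 2| ≤ |t| ^ (2 + 1) / (1 - |t|) :=
        hseries.trans_eq' (by congr 1; push_cast; ring)
    _ ≤ |t| ^ 3 / (1 / 2) := by gcongr; linarith
    _ = 2 * |t| ^ 3 := by ring

theorem abs_one_add_mul_log_one_add_sub_le {t : ℝ} (ht : |t| ≤ 1 / 2) :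
    |(1 + t) * log (1 + t) - t - t ^ 2 / 2| ≤ 4 * |t| ^ 3 := by
  set e := log (1 + t) - t + t ^ 2 / 2
  have h1t : |1 + t| ≤ 3 / 2 := by rw [abs_le] at ht ⊢; constructor <;> linarith
  calc |(1 + t) * log (1 + t) - t - t ^ 2 / 2| = |(1 + t) * e - t ^ 3 / 2| := by
        congr 1; ring
    _ ≤ |1 + t| * |e| + |t| ^ 3 / 2 := by
        refine (abs_sub _ _).trans_eq ?_
        rw [abs_mul, abs_div, abs_pow, abs_two]
    _ ≤ 3 / 2 * (2 * |t| ^ 3) + |t| ^ 3 / 2 := by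
        gcongr
        exact abs_log_one_add_sub_le ht
    _ ≤ 4 * |t| ^ 3 := by linarith [pow_nonneg (abs_nonneg t) 3]

/-- At `a = 0` the quadratic term is `0` by the convention `x / 0 = 0`. -/
noncomputable def mulLogTaylorRemainder (a b : ℝ) : ℝ :=
  (a + b) * log (a + b) - a * log a - b * (log a + 1) - b ^ 2 / (2 * a)

theorem abs_mulLogTaylorRemainder_le {a b m : ℝ} (ha : 0 ≤ a) (hm : m ≤ 1 / 2)
    (hb : |b| ≤ m * a) : |mulLogTaylorRemainder a b| ≤ 4 * m ^ 3 * a := by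
  rcases ha.eq_or_lt with rfl | ha
  · have : b = 0 := abs_nonpos_iff.mp (by simpa using hb)
    simp [mulLogTaylorRemainder, this]
  obtain ⟨t, rfl⟩ : ∃ t, b = a * t := ⟨b / a, by field_simp⟩
  have htm : |t| ≤ m := by
    rw [abs_mul, abs_of_pos ha, mul_comm] at hb
    exact le_of_mul_le_mul_right hb ha
  have h1t : 0 < 1 + t := by linarith [neg_abs_le t]
  have hscale : mulLogTaylorRemainder a (a * t) = a * ((1 + t) * log (1 + t) - t - t ^ 2 / 2) := by
    rw [mulLogTaylorRemainder, show a + a * t = a * (1 + t) by ring,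
      log_mul ha.ne' h1t.ne']
    field_simp
    ring
  rw [hscale, abs_mul, abs_of_pos ha, mul_comm]
  gcongr
  calc _ ≤ 4 * |t| ^ 3 := abs_one_add_mul_log_one_add_sub_le (htm.trans hm)
    _ ≤ 4 * m ^ 3 := by gcongr

section Integral

variable {α : Type*} [MeasurableSpace α] {μ : Measure α} {p r : α → ℝ} {m : ℝ}

theorem integrable_mulLogTaylorRemainder (hp : Measurable p) (hr : Measurable r)
    (hp0 : ∀ x, 0 ≤ p x) (hpi : Integrable p μ) (hm : m ≤ 1 / 2)
    (hrm : ∀ x, |r x| ≤ m * p x) :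
    Integrable (fun x => mulLogTaylorRemainder (p x) (r x)) μ := by
  have hmeas : Measurable fun x => mulLogTaylorRemainder (p x) (r x) := by
    unfold mulLogTaylorRemainder
    fun_prop
  exact (hpi.const_mul (4 * m ^ 3)).mono' hmeas.aestronglyMeasurable
    (ae_of_all _ fun x => abs_mulLogTaylorRemainder_le (hp0 x) hm (hrm x))

theorem abs_integral_mulLogTaylorRemainder_le (hp0 : ∀ x, 0 ≤ p x) (hpi : Integrable p μ)
    (hm : m ≤ 1 / 2) (hrm : ∀ x, |r x| ≤ m * p x) :
    |∫ x, mulLogTaylorRemainder (p x) (r x) ∂μ| ≤ 4 * m ^ 3 * ∫ x, p x ∂μ := by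
  rw [← integral_const_mul]
  exact norm_integral_le_of_norm_le (hpi.const_mul _)
    (ae_of_all _ fun x =>
      (norm_eq_abs _).trans_le (abs_mulLogTaylorRemainder_le (hp0 x) hm (hrm x)))

theorem integral_add_mul_log_add_eq (ε : ℝ)
    (hR : Integrable (fun x => mulLogTaylorRemainder (p x) (ε * r x)) μ)
    (hA : Integrable (fun x => p x * log (p x)) μ) (hB : Integrable (fun x => r x * log (p x)) μ)
    (hr : Integrable r μ) (hD : Integrable (fun x => r x ^ 2 / p x) μ) :
    ∫ x, (p x + ε * r x) * log (p x + ε * r x) ∂μ =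
      (∫ x, mulLogTaylorRemainder (p x) (ε * r x) ∂μ) + (∫ x, p x * log (p x) ∂μ)
        + ε * (∫ x, r x * log (p x) ∂μ) + ε * (∫ x, r x ∂μ)
        + ε ^ 2 / 2 * ∫ x, r x ^ 2 / p x ∂μ := by
  have hsplit : ∀ x, (p x + ε * r x) * log (p x + ε * r x) =
      mulLogTaylorRemainder (p x) (ε * r x) + (p x * log (p x)
        + (ε * (r x * log (p x)) + (ε * r x + ε ^ 2 / 2 * (r x ^ 2 / p x)))) := fun x => by
    unfold mulLogTaylorRemainder; ring
  simp_rw [hsplit]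
  rw [integral_add hR (by fun_prop), integral_add hA (by fun_prop),
    integral_add (by fun_prop) (by fun_prop), integral_add (by fun_prop) (by fun_prop),
    integral_const_mul, integral_const_mul, integral_const_mul]
  ring

end Integral

theorem stmt_13 :
    ∃ C : ℝ, 0 < C ∧
      ∀ (d : ℕ) (p r : EuclideanSpace ℝ (Fin d) → ℝ) (M : ℝ),
        Measurable p → Measurable r →
        (∀ x, 0 ≤ p x) → (∫ x, p x = 1) → (∫ x, r x = 0) →
        (∀ x, |r x| ≤ M * p x) →
        Integrable (fun x => p x * Real.log (p x)) →
        Integrable (fun x => r x * Real.log (p x)) →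
        Integrable (fun x => r x ^ 2 / p x) →
        ∀ ε : ℝ, |ε| < 1 / (2 * M) →
          |(∫ x, (p x + ε * r x) * Real.log (p x + ε * r x))
              - (∫ x, p x * Real.log (p x)) - ε * (∫ x, r x * Real.log (p x))
              - ε ^ 2 / 2 * (∫ x, r x ^ 2 / p x)|
            ≤ C * |ε| ^ 3 * M ^ 3 := by
  refine ⟨4, by norm_num, fun d p r M hp hr hp0 hp1 hr0 hrM hA hB hD ε hε => ?_⟩
  have hM : 0 < M := by
    by_contra! hM
    exact (abs_nonneg ε).not_gt
      (hε.trans_le (div_nonpos_of_nonneg_of_nonpos zero_le_one (by linarith)))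
  have hεM : |ε| * M ≤ 1 / 2 := by
    rw [lt_div_iff₀ (by positivity)] at hε
    linarith
  have hpi : Integrable p := Integrable.of_integral_ne_zero (by rw [hp1]; exact one_ne_zero)
  have hri : Integrable r := (hpi.const_mul M).mono' hr.aestronglyMeasurable (ae_of_all _ hrM)
  have hεr : ∀ x, |ε * r x| ≤ |ε| * M * p x := fun x => by
    rw [abs_mul, mul_assoc]
    exact mul_le_mul_of_nonneg_left (hrM x) (abs_nonneg ε)
  have hRi := integrable_mulLogTaylorRemainder hp (hr.const_mul ε) hp0 hpi hεM hεr
  rw [integral_add_mul_log_add_eq ε hRi hA hB hri hD, hr0]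
  calc _ = |∫ x, mulLogTaylorRemainder (p x) (ε * r x)| := by congr 1; ring
    _ ≤ 4 * (|ε| * M) ^ 3 * ∫ x, p x := abs_integral_mulLogTaylorRemainder_le hp0 hpi hεM hεr
    _ = 4 * |ε| ^ 3 * M ^ 3 := by rw [hp1]; ring
end
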